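/- arXiv:1403.3169 — 6 statements merged into one kernel-verified Lean document; each statement's English description precedes it below -/
import Mathlib

section
/- Let M be a metric space with diameter at most π in which every triple of points x, y, z satisfies |xy| + |yz| + |zx| ≤ 2π, and let f : 𝕊^k → M be a noncontractive map from the k-dimensional unit sphere (i.e. |f(x)f(y)| ≥ |xy| for all x, y). Then f is an isometric embedding, i.e. |f(x)f(y)| = |xy| for all x, y ∈ 𝕊^k. -/
open Real
open scoped RealInnerProductSpace

/-- If `M` is a metric space with diameter at most `π` in which every triple
of points has perimeter at most `2π`, and `f` is a noncontractive map from the unit sphere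
`𝕊^k ⊆ ℝ^(k+1)` (with the angular metric `arccos ⟪x,y⟫`) to `M`, then `f` preserves
distances, i.e. it is an isometric embedding. -/
theorem sphere_noncontractive_is_isometric
    (k : ℕ) (M : Type*) [MetricSpace M]
    (hdiam : ∀ a b : M, dist a b ≤ π)
    (hperim : ∀ a b c : M, dist a b + dist b c + dist c a ≤ 2 * π)
    (f : EuclideanSpace ℝ (Fin (k + 1)) → M)
    (hf : ∀ x y : EuclideanSpace ℝ (Fin (k + 1)), ‖x‖ = 1 → ‖y‖ = 1 →
      arccos ⟪x, y⟫ ≤ dist (f x) (f y)) :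
    ∀ x y : EuclideanSpace ℝ (Fin (k + 1)), ‖x‖ = 1 → ‖y‖ = 1 →
      dist (f x) (f y) = arccos ⟪x, y⟫ := by
  intro x y hx hy
  have hny : ‖(-y : EuclideanSpace ℝ (Fin (k + 1)))‖ = 1 := by rwa [norm_neg]
  have h1 := hf x y hx hy
  have h2 := hf x (-y) hx hny
  have h3 := hf y (-y) hy hny
  have hyy : ⟪y, (-y : EuclideanSpace ℝ (Fin (k + 1)))⟫ = -1 := by
    rw [inner_neg_right, real_inner_self_eq_norm_sq, hy]; norm_num
  have hxny : ⟪x, (-y : EuclideanSpace ℝ (Fin (k + 1)))⟫ = -⟪x, y⟫ := by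
    rw [inner_neg_right]
  rw [hyy, Real.arccos_neg, Real.arccos_one, sub_zero] at h3
  rw [hxny, Real.arccos_neg] at h2
  have hp := hperim (f x) (f y) (f (-y))
  have := dist_comm (f (-y)) (f x)
  linarith [hp]
end

section
/- In the unit sphere 𝕊^{n-1} ⊂ ℝ^n with the angular metric d(x,y) = arccos⟨x,y⟩, if q_1, …, q_k are points with d(q_i, q_j) ≥ π/2 for all i ≠ j, then k ≤ 2n; moreover, if k = 2n, then the points can be paired up so that each pair consists of antipodal points (distance π). -/
open Real
open scoped RealInnerProductSpace

private lemma key : ∀ (n : ℕ) (E : Type) [NormedAddCommGroup E] [InnerProductSpace ℝ E]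
    [FiniteDimensional ℝ E], Module.finrank ℝ E ≤ n →
    ∀ (ι : Type) [Fintype ι] (u : ι → E), (∀ i, u i ≠ 0) →
    (∀ i j, i ≠ j → ⟪u i, u j⟫ ≤ 0) →
    Fintype.card ι ≤ 2 * n ∧
      (Fintype.card ι = 2 * n → ∀ i, ∃ j, ∃ c : ℝ, 0 < c ∧ u j = -(c • u i)) := by
  intro n
  induction n with
  | zero =>
    intro E _ _ _ hE ι _ u hne _
    haveI : Subsingleton E := Module.finrank_zero_iff.mp (Nat.le_zero.mp hE)
    haveI : IsEmpty ι := ⟨fun i => hne i (Subsingleton.elim _ _)⟩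
    exact ⟨by simp, fun _ i => isEmptyElim i⟩
  | succ n ih =>
    intro E _ _ _ hE ι _ u hne hsep
    classical
    by_cases hι : IsEmpty ι
    · refine ⟨by simp [Fintype.card_eq_zero], fun h => ?_⟩
      rw [Fintype.card_eq_zero] at h
      omega
    obtain ⟨i0⟩ := not_isEmpty_iff.mp hι
    set u0 : E := u i0 with hu0def
    have hu0 : u0 ≠ 0 := hne i0
    set N : ℝ := ‖u0‖ ^ 2 with hNdef
    have hN : 0 < N := pow_pos (norm_pos_iff.mpr hu0) 2
    set P : E → E := fun x => x - (⟪u0, x⟫ / N) • u0 with hPdef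
    have hPmem : ∀ x, P x ∈ (ℝ ∙ u0)ᗮ := by
      intro x
      rw [Submodule.mem_orthogonal_singleton_iff_inner_right]
      simp only [hPdef, inner_sub_right, real_inner_smul_right,
        real_inner_self_eq_norm_sq, ← hNdef]
      field_simp
      ring
    have hrank : Module.finrank ℝ ((ℝ ∙ u0)ᗮ) ≤ n := by
      have h1 : Module.finrank ℝ (ℝ ∙ u0) = 1 := finrank_span_singleton hu0
      have h2 := Submodule.finrank_add_finrank_orthogonal (K := ℝ ∙ u0) (𝕜 := ℝ) (E := E)
      omega
    have hPval : ∀ x y : E, ⟪P x, P y⟫ = ⟪x, y⟫ - ⟪u0, x⟫ * ⟪u0, y⟫ / N := by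
      intro x y
      simp only [hPdef, inner_sub_left, inner_sub_right, real_inner_smul_left,
        real_inner_smul_right, real_inner_self_eq_norm_sq, ← hNdef,
        real_inner_comm x u0]
      field_simp
      ring
    have hPinner : ∀ x y : E, ⟪u0, x⟫ ≤ 0 → ⟪u0, y⟫ ≤ 0 → ⟪x, y⟫ ≤ 0 →
        ⟪P x, P y⟫ ≤ 0 := by
      intro x y hx hy hxy
      rw [hPval]
      have h1 : 0 ≤ ⟪u0, x⟫ * ⟪u0, y⟫ := by nlinarith
      have h2 : 0 ≤ ⟪u0, x⟫ * ⟪u0, y⟫ / N := by positivity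
      linarith
    by_cases hA : ∃ a, a ≠ i0 ∧ P (u a) = 0
    · -- u0 has an antipodal partner a; all others are orthogonal to u0
      obtain ⟨a, hai0, hPa⟩ := hA
      set t : ℝ := ⟪u0, u a⟫ / N with htdef
      have hua : u a = t • u0 := by
        have := sub_eq_zero.mp hPa
        simpa using this
      have hta : ⟪u0, u a⟫ ≤ 0 := hsep i0 a (Ne.symm hai0)
      have ht0 : t < 0 := by
        rcases (div_nonpos_of_nonpos_of_nonneg hta hN.le).lt_or_eq with h | h
        · exact h
        · exfalso; apply hne a; rw [hua, htdef, h, zero_smul]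
      have horth : ∀ i, i ≠ i0 → i ≠ a → ⟪u0, u i⟫ = 0 := by
        intro i h1 h2
        have hA' : ⟪u0, u i⟫ ≤ 0 := hsep i0 i (Ne.symm h1)
        have hB : ⟪u a, u i⟫ ≤ 0 := hsep a i (Ne.symm h2)
        rw [hua, real_inner_smul_left] at hB
        nlinarith
      have horth' : ∀ i : {i : ι // ¬(i = i0 ∨ i = a)}, u i.1 ∈ (ℝ ∙ u0)ᗮ := by
        intro i
        rw [Submodule.mem_orthogonal_singleton_iff_inner_right]
        have := i.2
        push_neg at this
        exact horth i.1 this.1 this.2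
      set u'' : {i : ι // ¬(i = i0 ∨ i = a)} → ((ℝ ∙ u0)ᗮ : Submodule ℝ E) :=
        fun i => ⟨u i.1, horth' i⟩ with hu''def
      have hne'' : ∀ i, u'' i ≠ 0 := by
        intro i h
        exact hne i.1 (congrArg Subtype.val h)
      have hsep'' : ∀ i j, i ≠ j → ⟪u'' i, u'' j⟫ ≤ 0 := by
        intro i j hij
        have : i.1 ≠ j.1 := fun h => hij (Subtype.ext h)
        exact hsep i.1 j.1 this
      obtain ⟨hcard'', heq''⟩ := ih _ hrank _ u'' hne'' hsep''
      have hpair : Fintype.card {i : ι // i = i0 ∨ i = a} = 2 := by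
        rw [Fintype.card_subtype]
        have : (Finset.univ.filter fun i : ι => i = i0 ∨ i = a) = {i0, a} := by
          ext i; simp
        rw [this, Finset.card_insert_of_notMem (by simpa using (Ne.symm hai0)),
          Finset.card_singleton]
      have hcompl := Fintype.card_subtype_compl (fun i : ι => i = i0 ∨ i = a)
      have hle2 : Fintype.card {i : ι // i = i0 ∨ i = a} ≤ Fintype.card ι :=
        Fintype.card_subtype_le _
      rw [hpair] at hcompl hle2
      refine ⟨by omega, fun hk => ?_⟩
      have hk'' : Fintype.card {i : ι // ¬(i = i0 ∨ i = a)} = 2 * n := by omega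
      intro i
      by_cases hii0 : i = i0
      · refine ⟨a, -t, neg_pos.mpr ht0, ?_⟩
        rw [hua, hii0, ← hu0def, neg_smul, neg_neg]
      by_cases hia : i = a
      · refine ⟨i0, -t⁻¹, neg_pos.mpr (inv_lt_zero.mpr ht0), ?_⟩
        rw [hia, hua, ← hu0def, smul_smul, neg_mul, inv_mul_cancel₀ ht0.ne]
        simp
      · obtain ⟨j, c, hc, hj⟩ := heq'' hk'' ⟨i, by push_neg; exact ⟨hii0, hia⟩⟩
        refine ⟨j.1, c, hc, ?_⟩
        have := congrArg Subtype.val hj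
        simpa [hu''def] using this
    · -- no antipodal partner for u0: project everything else
      push_neg at hA
      set u' : {i : ι // ¬ i = i0} → ((ℝ ∙ u0)ᗮ : Submodule ℝ E) :=
        fun i => ⟨P (u i.1), hPmem _⟩ with hu'def
      have hne' : ∀ i, u' i ≠ 0 := by
        intro i h
        exact hA i.1 i.2 (congrArg Subtype.val h)
      have hsep' : ∀ i j, i ≠ j → ⟪u' i, u' j⟫ ≤ 0 := by
        intro i j hij
        have hij' : i.1 ≠ j.1 := fun h => hij (Subtype.ext h)
        exact hPinner _ _ (hsep i0 i.1 (Ne.symm i.2)) (hsep i0 j.1 (Ne.symm j.2))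
          (hsep i.1 j.1 hij')
      obtain ⟨hcard', _⟩ := ih _ hrank _ u' hne' hsep'
      have hcompl := Fintype.card_subtype_compl (fun i : ι => i = i0)
      rw [Fintype.card_subtype_eq] at hcompl
      have hone : 1 ≤ Fintype.card ι := Fintype.card_pos_iff.mpr ⟨i0⟩
      have : Fintype.card {i : ι // ¬ i = i0} = Fintype.card ι - 1 := hcompl
      exact ⟨by omega, fun hk => by omega⟩

/-- On the unit sphere `𝕊^{n-1} ⊆ ℝ^n` with the angular metric
`d(x,y) = arccos ⟪x,y⟫`, any `π/2`-separated family of `k` points satisfies `k ≤ 2n`;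
and if `k = 2n` the points can be paired up into antipodal pairs. -/
theorem sphere_half_pi_separated_card_le_and_pairing
    (n k : ℕ) (q : Fin k → EuclideanSpace ℝ (Fin n))
    (hunit : ∀ i, ‖q i‖ = 1)
    (hsep : ∀ i j, i ≠ j → π / 2 ≤ arccos ⟪q i, q j⟫) :
    k ≤ 2 * n ∧
      (k = 2 * n → ∃ σ : Equiv.Perm (Fin k), Function.Involutive σ ∧
        ∀ i, σ i ≠ i ∧ q (σ i) = -(q i)) := by
  classical
  have hne : ∀ i, q i ≠ 0 := by
    intro i h
    have := hunit i
    rw [h, norm_zero] at this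
    norm_num at this
  have hsep' : ∀ i j, i ≠ j → ⟪q i, q j⟫ ≤ 0 := by
    intro i j hij
    by_contra h
    push_neg at h
    have := arccos_lt_pi_div_two.mpr h
    have := hsep i j hij
    linarith
  have hrank : Module.finrank ℝ (EuclideanSpace ℝ (Fin n)) ≤ n := by
    simp [finrank_euclideanSpace]
  obtain ⟨hcard, heq⟩ := key n (EuclideanSpace ℝ (Fin n)) hrank (Fin k) q hne hsep'
  rw [Fintype.card_fin] at hcard heq
  refine ⟨hcard, fun hk => ?_⟩
  have hanti : ∀ i, ∃ j, q j = -(q i) := by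
    intro i
    obtain ⟨j, c, hc, hj⟩ := heq hk i
    have hnorm : ‖q j‖ = c * ‖q i‖ := by
      rw [hj, norm_neg, norm_smul, Real.norm_of_nonneg hc.le]
    rw [hunit i, hunit j, mul_one] at hnorm
    refine ⟨j, ?_⟩
    rw [hj, ← hnorm, one_smul]
  have hinj : Function.Injective q := by
    intro i j hij
    by_contra h
    have := hsep' i j h
    rw [hij, real_inner_self_eq_norm_sq, hunit j] at this
    norm_num at this
  set f : Fin k → Fin k := fun i => (hanti i).choose with hfdef
  have hf : ∀ i, q (f i) = -(q i) := fun i => (hanti i).choose_spec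
  have hff : Function.Involutive f := by
    intro i
    apply hinj
    rw [hf, hf, neg_neg]
  refine ⟨⟨f, f, hff, hff⟩, hff, fun i => ⟨?_, hf i⟩⟩
  intro h
  have h2 : q (f i) = q i := congrArg q h
  rw [hf i] at h2
  have h3 : (2 : ℝ) • q i = 0 := by
    rw [two_smul]
    nth_rewrite 1 [← h2]
    simp
  rcases smul_eq_zero.mp h3 with h4 | h4
  · norm_num at h4
  · exact hne i h4
end

section
/- Let n = 2l - 1 be odd and let q_1, …, q_k be points on the unit sphere 𝕊^n ⊂ ℝ^{n+1} (angular metric) with π/2 ≤ d(q_i, q_j) < π for all i ≠ j. Then k ≤ 3l. (Equivalently: the unit sphere 𝕊^{2l-1} contains at most 3l unit vectors q_i such that ⟨q_i,q_j⟩ ≤ 0 and q_j ≠ -q_i for all i ≠ j.) -/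
open Real
open scoped RealInnerProductSpace

namespace SphereSepAux

open Finset Submodule Module

variable {E : Type*} [NormedAddCommGroup E] [InnerProductSpace ℝ E] {k : ℕ}

/-- The "negative inner product" adjacency relation among indices inside a finset. -/
def rel (q : Fin k → E) (s : Finset (Fin k)) (i j : Fin k) : Prop :=
  i ∈ s ∧ j ∈ s ∧ ⟪q i, q j⟫ < 0

theorem reach_mem {q : Fin k → E} {s P : Finset (Fin k)}
    (hclosed : ∀ b ∈ P, ∀ c, ⟪q b, q c⟫ < 0 → c ∈ P)
    {i j : Fin k} (hi : i ∈ P) (hpath : Relation.ReflTransGen (rel q s) i j) : j ∈ P := by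
  induction hpath with
  | refl => exact hi
  | tail hab hbc ih => exact hclosed _ ih _ hbc.2.2

/-- Key linear-independence lemma: in a connected component (w.r.t. negative inner
products), deleting any one vector leaves a linearly independent family. -/
theorem indep (q : Fin k → E)
    (hneg : ∀ i j : Fin k, i ≠ j → ⟪q i, q j⟫ ≤ 0)
    (s : Finset (Fin k))
    (hconn : ∀ i ∈ s, ∀ j ∈ s, Relation.ReflTransGen (rel q s) i j)
    (w : Fin k) (hw : w ∈ s) :
    LinearIndependent ℝ (fun i : (s.erase w : Finset (Fin k)) => q i) := by
  classical
  set t := s.erase w with htdef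
  rw [Fintype.linearIndependent_iff]
  intro g hg
  set g' : Fin k → ℝ := fun i => if h : i ∈ t then g ⟨i, h⟩ else 0 with hg'def
  have hgg : ∀ i : ↥t, g' ↑i = g i := fun i => by
    simp only [hg'def, dif_pos i.2]
  have hsum : ∑ i ∈ t, g' i • q i = 0 := by
    rw [← Finset.sum_coe_sort t (fun i => g' i • q i), ← hg]
    exact Finset.sum_congr rfl (fun i _ => by rw [hgg])
  set P : Finset (Fin k) := t.filter (fun i => 0 < g' i) with hPdef
  set N : Finset (Fin k) := t.filter (fun i => g' i < 0) with hNdef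
  have hPt : P ⊆ t := Finset.filter_subset _ _
  have hNt : N ⊆ t := Finset.filter_subset _ _
  have hPN : Disjoint P N := by
    rw [Finset.disjoint_left]
    intro a haP haN
    have h1 := (Finset.mem_filter.mp haP).2
    have h2 := (Finset.mem_filter.mp haN).2
    linarith
  set x : E := ∑ i ∈ P, g' i • q i with hxdef
  set y : E := ∑ i ∈ N, (-g' i) • q i with hydef
  have hxmy : x = y := by
    have h1 : ∑ i ∈ P ∪ N, g' i • q i = ∑ i ∈ t, g' i • q i := by
      apply Finset.sum_subset (Finset.union_subset hPt hNt)
      intro a ha haPN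
      have h0 : g' a = 0 := by
        by_contra h0
        rcases lt_or_gt_of_ne h0 with h | h
        · exact haPN (Finset.mem_union_right _ (Finset.mem_filter.mpr ⟨ha, h⟩))
        · exact haPN (Finset.mem_union_left _ (Finset.mem_filter.mpr ⟨ha, h⟩))
      rw [h0, zero_smul]
    rw [Finset.sum_union hPN, hsum] at h1
    have hyn : ∑ i ∈ N, g' i • q i = -y := by
      rw [hydef, ← Finset.sum_neg_distrib]
      exact Finset.sum_congr rfl fun i _ => by rw [neg_smul, neg_neg]
    rw [hyn] at h1
    have : x + -y = 0 := h1
    linear_combination (norm := abel) this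
  have hPii : ∀ i ∈ P, 0 < g' i := fun i hi => (Finset.mem_filter.mp hi).2
  have hNii : ∀ i ∈ N, g' i < 0 := fun i hi => (Finset.mem_filter.mp hi).2
  have hxy_nonpos : ⟪x, y⟫ ≤ 0 := by
    rw [hxdef, hydef, sum_inner]
    apply Finset.sum_nonpos
    intro i hi
    rw [real_inner_smul_left, inner_sum]
    apply mul_nonpos_iff.mpr
    left
    refine ⟨(hPii i hi).le, Finset.sum_nonpos fun j hj => ?_⟩
    rw [real_inner_smul_right]
    apply mul_nonpos_iff.mpr
    left
    have hij : i ≠ j := fun h => Finset.disjoint_left.mp hPN hi (h ▸ hj)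
    exact ⟨by linarith [hNii j hj], hneg i j hij⟩
  have hx0 : x = 0 := by
    rw [← hxmy] at hxy_nonpos
    exact real_inner_self_nonpos.mp hxy_nonpos
  have hy0 : y = 0 := hxmy ▸ hx0
  -- orthogonality of everything outside P to P
  have horthP : ∀ u, u ∉ P → ∀ i ∈ P, ⟪q u, q i⟫ = 0 := by
    intro u hu i hiP
    have h := hx0
    rw [hxdef] at h
    have h0 : ∑ j ∈ P, g' j * ⟪q u, q j⟫ = 0 := by
      calc ∑ j ∈ P, g' j * ⟪q u, q j⟫ = ⟪q u, ∑ j ∈ P, g' j • q j⟫ := by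
            rw [inner_sum]
            exact Finset.sum_congr rfl fun j _ => (real_inner_smul_right _ _ _).symm
        _ = 0 := by rw [h, inner_zero_right]
    have hnp : ∀ j ∈ P, g' j * ⟪q u, q j⟫ ≤ 0 := by
      intro j hj
      apply mul_nonpos_iff.mpr
      left
      exact ⟨(hPii j hj).le, hneg u j (fun hco => hu (hco ▸ hj))⟩
    have hz := (Finset.sum_eq_zero_iff_of_nonpos hnp).mp h0 i hiP
    exact (mul_eq_zero.mp hz).resolve_left (ne_of_gt (hPii i hiP))
  have horthN : ∀ u, u ∉ N → ∀ i ∈ N, ⟪q u, q i⟫ = 0 := by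
    intro u hu i hiN
    have h := hy0
    rw [hydef] at h
    have h0 : ∑ j ∈ N, (-g' j) * ⟪q u, q j⟫ = 0 := by
      calc ∑ j ∈ N, (-g' j) * ⟪q u, q j⟫ = ⟪q u, ∑ j ∈ N, (-g' j) • q j⟫ := by
            rw [inner_sum]
            exact Finset.sum_congr rfl fun j _ => (real_inner_smul_right _ _ _).symm
        _ = 0 := by rw [h, inner_zero_right]
    have hnp : ∀ j ∈ N, (-g' j) * ⟪q u, q j⟫ ≤ 0 := by
      intro j hj
      apply mul_nonpos_iff.mpr
      left
      refine ⟨by linarith [hNii j hj], hneg u j (fun hco => hu (hco ▸ hj))⟩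
    have hz := (Finset.sum_eq_zero_iff_of_nonpos hnp).mp h0 i hiN
    have : (-g' i) ≠ 0 := by have := hNii i hiN; intro hc; linarith
    exact (mul_eq_zero.mp hz).resolve_left this
  -- both P and N must be empty, via connectivity
  have hPe : P = ∅ := by
    by_contra hPne
    obtain ⟨i₀, hi₀⟩ := Finset.nonempty_iff_ne_empty.mpr hPne
    have hi₀s : i₀ ∈ s := Finset.mem_of_mem_erase (hPt hi₀)
    have hpath := hconn i₀ hi₀s w hw
    have hclosed : ∀ b ∈ P, ∀ c, ⟪q b, q c⟫ < 0 → c ∈ P := by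
      intro b hb c hbc
      by_contra hcP
      have := horthP c hcP b hb
      rw [real_inner_comm] at this
      linarith
    have hwP : w ∈ P := reach_mem hclosed hi₀ hpath
    exact Finset.notMem_erase w s (hPt hwP)
  have hNe : N = ∅ := by
    by_contra hNne
    obtain ⟨i₀, hi₀⟩ := Finset.nonempty_iff_ne_empty.mpr hNne
    have hi₀s : i₀ ∈ s := Finset.mem_of_mem_erase (hNt hi₀)
    have hpath := hconn i₀ hi₀s w hw
    have hclosed : ∀ b ∈ N, ∀ c, ⟪q b, q c⟫ < 0 → c ∈ N := by
      intro b hb c hbc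
      by_contra hcN
      have := horthN c hcN b hb
      rw [real_inner_comm] at this
      linarith
    have hwN : w ∈ N := reach_mem hclosed hi₀ hpath
    exact Finset.notMem_erase w s (hNt hwN)
  intro i
  rw [← hgg i]
  by_contra hne
  rcases lt_or_gt_of_ne hne with h | h
  · have : (↑i : Fin k) ∈ N := Finset.mem_filter.mpr ⟨i.2, h⟩
    rw [hNe] at this
    exact absurd this (Finset.notMem_empty _)
  · have : (↑i : Fin k) ∈ P := Finset.mem_filter.mpr ⟨i.2, h⟩
    rw [hPe] at this
    exact absurd this (Finset.notMem_empty _)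

theorem pair_indep {u v : E} (hu : ‖u‖ = 1) (hv : ‖v‖ = 1)
    (h1 : ⟪u, v⟫ ≤ 0) (h2 : -1 < ⟪u, v⟫) : LinearIndependent ℝ ![u, v] := by
  have hu0 : u ≠ 0 := by
    intro h; rw [h, norm_zero] at hu; norm_num at hu
  rw [LinearIndependent.pair_iff' hu0]
  intro a hva
  have ha : ⟪u, v⟫ = a := by
    rw [← hva, real_inner_smul_right, real_inner_self_eq_norm_sq, hu]
    ring
  have hnorm : |a| = 1 := by
    have : ‖v‖ = |a| * ‖u‖ := by rw [← hva, norm_smul, Real.norm_eq_abs]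
    rw [hu, hv, mul_one] at this
    exact this.symm
  rcases abs_eq (by norm_num : (0:ℝ) ≤ 1) |>.mp hnorm with h | h
  · rw [ha, h] at h1; linarith
  · rw [ha, h] at h2; linarith

/-- Main inductive bound: any finite family of unit vectors with pairwise inner products
in `(-1, 0]` satisfies `2·(number of vectors) ≤ 3·(dimension of span)`. -/
theorem main_bound [FiniteDimensional ℝ E] (q : Fin k → E) (hu : ∀ i, ‖q i‖ = 1)
    (hneg : ∀ i j : Fin k, i ≠ j → ⟪q i, q j⟫ ≤ 0)
    (hnant : ∀ i j : Fin k, i ≠ j → -1 < ⟪q i, q j⟫) :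
    ∀ s : Finset (Fin k), 2 * s.card ≤ 3 * finrank ℝ (span ℝ (q '' ↑s)) := by
  intro s
  induction s using Finset.strongInduction with
  | _ s ih =>
  classical
  rcases Finset.eq_empty_or_nonempty s with rfl | ⟨v₀, hv₀⟩
  · simp
  set S := s.filter (fun i => Relation.ReflTransGen (rel q s) v₀ i) with hSdef
  have hSsub : S ⊆ s := Finset.filter_subset _ _
  have hv₀S : v₀ ∈ S := Finset.mem_filter.mpr ⟨hv₀, Relation.ReflTransGen.refl⟩
  set T := s \ S with hTdef
  have hTs : T ⊂ s := Finset.sdiff_ssubset hSsub ⟨v₀, hv₀S⟩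
  have ihT := ih T hTs
  have hcross : ∀ i ∈ S, ∀ j ∈ T, ⟪q i, q j⟫ = 0 := by
    intro i hi j hj
    obtain ⟨hjs, hjS⟩ := Finset.mem_sdiff.mp hj
    have hij : i ≠ j := fun h => hjS (h ▸ hi)
    rcases (hneg i j hij).lt_or_eq with hlt | heq
    · exact absurd (Finset.mem_filter.mpr
        ⟨hjs, (Finset.mem_filter.mp hi).2.tail ⟨hSsub hi, hjs, hlt⟩⟩) hjS
    · exact heq
  -- connectivity of S w.r.t. the relation restricted to S
  have hstay : ∀ j, Relation.ReflTransGen (rel q s) v₀ j → j ∈ S := by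
    intro j hj
    induction hj with
    | refl => exact hv₀S
    | tail hab hbc ih2 =>
        exact Finset.mem_filter.mpr ⟨hbc.2.1, ((Finset.mem_filter.mp ih2).2).tail hbc⟩
  have hlift : ∀ j, Relation.ReflTransGen (rel q s) v₀ j →
      Relation.ReflTransGen (rel q S) v₀ j := by
    intro j hj
    induction hj with
    | refl => exact Relation.ReflTransGen.refl
    | tail hab hbc ih2 =>
        exact ih2.tail ⟨hstay _ hab, hstay _ (hab.tail hbc), hbc.2.2⟩
  have hsymmS : Symmetric (rel q S) := fun a b h =>
    ⟨h.2.1, h.1, by rw [real_inner_comm]; exact h.2.2⟩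
  have hconnS : ∀ i ∈ S, ∀ j ∈ S, Relation.ReflTransGen (rel q S) i j := by
    intro i hi j hj
    have hi' := hlift i (Finset.mem_filter.mp hi).2
    have hj' := hlift j (Finset.mem_filter.mp hj).2
    exact ((@Relation.ReflTransGen.stdSymm _ _ ⟨fun a b h => hsymmS h⟩).symm _ _ hi').trans hj'
  -- dimension bounds for the component S
  have hindep := indep q hneg S hconnS v₀ hv₀S
  have hrange : Set.range (fun i : (S.erase v₀ : Finset (Fin k)) => q ↑i)
      = q '' ↑(S.erase v₀) := by
    ext e
    simp [Set.mem_image]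
    tauto
  have hd1 : S.card - 1 ≤ finrank ℝ (span ℝ (q '' ↑S)) := by
    have h1 : finrank ℝ (span ℝ (q '' ↑(S.erase v₀))) = (S.erase v₀).card := by
      rw [← hrange, finrank_span_eq_card hindep, Fintype.card_coe]
    have h2 : span ℝ (q '' ↑(S.erase v₀)) ≤ span ℝ (q '' ↑S) :=
      span_mono (Set.image_mono (Finset.coe_subset.mpr (Finset.erase_subset _ _)))
    have h3 := Submodule.finrank_mono h2
    rw [h1, Finset.card_erase_of_mem hv₀S] at h3
    exact h3
  have hd2 : 1 ≤ finrank ℝ (span ℝ (q '' ↑S)) := by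
    have hne : q v₀ ≠ 0 := by
      intro h
      have := hu v₀
      rw [h, norm_zero] at this
      norm_num at this
    have h1 : (ℝ ∙ q v₀) ≤ span ℝ (q '' ↑S) :=
      span_mono (Set.singleton_subset_iff.mpr ⟨v₀, hv₀S, rfl⟩)
    have h3 := Submodule.finrank_mono h1
    rwa [finrank_span_singleton hne] at h3
  have hd3 : S.card = 2 → 2 ≤ finrank ℝ (span ℝ (q '' ↑S)) := by
    intro h2
    obtain ⟨a, b, hab, hSab⟩ := Finset.card_eq_two.mp h2
    have hli := pair_indep (hu a) (hu b) (hneg a b hab) (hnant a b hab)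
    have hr : Set.range ![q a, q b] = q '' ↑S := by
      rw [hSab]
      ext e
      simp [Fin.exists_fin_two]
      tauto
    have hfr : finrank ℝ (span ℝ (q '' ↑S)) = 2 := by
      rw [← hr, finrank_span_eq_card hli]
      simp
    omega
  have hcomp : 2 * S.card ≤ 3 * finrank ℝ (span ℝ (q '' ↑S)) := by
    by_cases h2 : S.card = 2
    · have := hd3 h2
      omega
    · omega
  -- orthogonal decomposition
  have hortho : span ℝ (q '' ↑S) ⟂ span ℝ (q '' ↑T) := by
    rw [Submodule.isOrtho_span]
    rintro u ⟨i, hi, rfl⟩ v ⟨j, hj, rfl⟩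
    exact hcross i (Finset.mem_coe.mp hi) j (Finset.mem_coe.mp hj)
  have hsup : finrank ℝ (span ℝ (q '' ↑s))
      = finrank ℝ (span ℝ (q '' ↑S)) + finrank ℝ (span ℝ (q '' ↑T)) := by
    have hunion : q '' ↑s = q '' ↑S ∪ q '' ↑T := by
      rw [← Set.image_union, ← Finset.coe_union, Finset.union_sdiff_of_subset hSsub]
    rw [hunion, Submodule.span_union]
    have h := Submodule.finrank_sup_add_finrank_inf_eq
      (span ℝ (q '' ↑S)) (span ℝ (q '' ↑T))
    rw [disjoint_iff.mp hortho.disjoint, finrank_bot] at h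
    omega
  have hcard : T.card + S.card = s.card := Finset.card_sdiff_add_card_eq_card hSsub
  omega

end SphereSepAux

/-- Let `n = 2l - 1` be odd (i.e. `n + 1 = 2l`) and let `q_1, …, q_k` be points
on the unit sphere `𝕊^n ⊆ ℝ^{n+1}` (angular metric) with `π/2 ≤ d(q_i,q_j) < π` for all
`i ≠ j`. Then `k ≤ 3l`. -/
theorem sphere_odd_dim_separated_lt_pi_card_le
    (l n k : ℕ) (hn : n + 1 = 2 * l)
    (q : Fin k → EuclideanSpace ℝ (Fin (n + 1)))
    (hunit : ∀ i, ‖q i‖ = 1)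
    (hsep : ∀ i j, i ≠ j → π / 2 ≤ arccos ⟪q i, q j⟫ ∧ arccos ⟪q i, q j⟫ < π) :
    k ≤ 3 * l := by
  have hneg : ∀ i j : Fin k, i ≠ j → ⟪q i, q j⟫ ≤ 0 := by
    intro i j hij
    by_contra h0
    push_neg at h0
    have h := (hsep i j hij).1
    have := Real.arccos_lt_pi_div_two.mpr h0
    linarith
  have hnant : ∀ i j : Fin k, i ≠ j → -1 < ⟪q i, q j⟫ := by
    intro i j hij
    by_contra h0
    push_neg at h0
    have h := (hsep i j hij).2
    have := Real.arccos_eq_pi.mpr h0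
    linarith
  have hA := SphereSepAux.main_bound q hunit hneg hnant Finset.univ
  have hle : Module.finrank ℝ (Submodule.span ℝ (q '' ↑(Finset.univ : Finset (Fin k))))
      ≤ n + 1 := by
    have h := Submodule.finrank_le (Submodule.span ℝ (q '' ↑(Finset.univ : Finset (Fin k))))
    rwa [finrank_euclideanSpace_fin] at h
  rw [Finset.card_univ, Fintype.card_fin] at hA
  omega
end

section
/- Let n = 2l be even and let q_1, …, q_k be points on the unit sphere 𝕊^n ⊂ ℝ^{n+1} (angular metric) with π/2 ≤ d(q_i, q_j) < π for all i ≠ j. Then k ≤ 3l + 1. -/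
open Real
open scoped RealInnerProductSpace

section Aux

variable {E : Type*} [NormedAddCommGroup E] [InnerProductSpace ℝ E]

/-- Splitting lemma: from any nontrivial linear dependency among vectors with pairwise
nonpositive inner products, we can extract a nontrivial dependency with nonnegative
coefficients, supported inside the support of the original dependency. -/
lemma split_dependency {ι : Type*} [Fintype ι] (v : ι → E)
    (hneg : ∀ i j, i ≠ j → ⟪v i, v j⟫ ≤ 0)
    (c : ι → ℝ) (hc : ∑ i, c i • v i = 0) (i₁ : ι) (hne : c i₁ ≠ 0) :
    ∃ a : ι → ℝ, (∀ i, 0 ≤ a i) ∧ (∃ i, a i ≠ 0) ∧ (∀ i, a i ≠ 0 → c i ≠ 0) ∧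
      ∑ i, a i • v i = 0 := by
  classical
  set p : ι → ℝ := fun i => max (c i) 0 with hp
  set q : ι → ℝ := fun i => max (-c i) 0 with hq
  have hpnn : ∀ i, 0 ≤ p i := fun i => le_max_right _ _
  have hqnn : ∀ i, 0 ≤ q i := fun i => le_max_right _ _
  have hpq : ∀ i, c i = p i - q i := by
    intro i
    rcases le_total (c i) 0 with h | h
    · simp [hp, hq, max_eq_right h, max_eq_left (neg_nonneg.mpr h)]
    · simp [hp, hq, max_eq_left h, max_eq_right (neg_nonpos.mpr h)]
  have hmul0 : ∀ i, p i * q i = 0 := by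
    intro i
    rcases le_total (c i) 0 with h | h
    · simp [hp, max_eq_right h]
    · simp [hq, max_eq_right (neg_nonpos.mpr h)]
  have hsub : ∑ i, p i • v i = ∑ i, q i • v i := by
    have h0 : ∑ i, p i • v i - ∑ i, q i • v i = 0 := by
      rw [← Finset.sum_sub_distrib, ← hc]
      exact Finset.sum_congr rfl fun i _ => by rw [← sub_smul, ← hpq]
    exact sub_eq_zero.mp h0
  have hwzero : ∑ i, p i • v i = 0 := by
    rw [← real_inner_self_nonpos]
    nth_rewrite 2 [hsub]
    have hinner : ⟪∑ i, p i • v i, ∑ j, q j • v j⟫ =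
        ∑ i, ∑ j, p i * (q j * ⟪v i, v j⟫) := by
      rw [sum_inner]
      refine Finset.sum_congr rfl fun i _ => ?_
      rw [inner_sum]
      refine Finset.sum_congr rfl fun j _ => ?_
      rw [real_inner_smul_left, real_inner_smul_right]
    rw [hinner]
    apply Finset.sum_nonpos
    intro i _
    apply Finset.sum_nonpos
    intro j _
    rcases eq_or_ne i j with rfl | hij
    · rw [← mul_assoc, hmul0, zero_mul]
    · have := hneg i j hij
      have h1 : 0 ≤ p i * q j := mul_nonneg (hpnn i) (hqnn j)
      nlinarith
  rcases lt_or_gt_of_ne hne with h | h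
  · -- c i₁ < 0 : use q
    refine ⟨q, hqnn, ⟨i₁, ?_⟩, ?_, by rw [← hsub]; exact hwzero⟩
    · simp [hq, max_eq_left (neg_nonneg.mpr h.le)]
      linarith
    · intro i hi hci
      apply hi
      simp [hq, hci]
  · -- c i₁ > 0 : use p
    refine ⟨p, hpnn, ⟨i₁, ?_⟩, ?_, hwzero⟩
    · simp [hp, max_eq_left h.le]
      linarith
    · intro i hi hci
      apply hi
      simp [hp, hci]

/-- Key lemma: unit vectors with pairwise inner products in `(-1, 0]` satisfy
`2k ≤ 3 · dim span`. Proved by strong induction: extract a minimal-support nonnegative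
dependency; its support `S` has size `≥ 3`, spans a subspace of dimension `|S| - 1`, and is
orthogonal to all remaining vectors. -/
lemma two_mul_card_le_three_mul_finrank_span [FiniteDimensional ℝ E] :
    ∀ (N : ℕ) (ι : Type) [Fintype ι], Fintype.card ι ≤ N →
      ∀ (v : ι → E), (∀ i, ‖v i‖ = 1) →
      (∀ i j, i ≠ j → ⟪v i, v j⟫ ≤ 0) → (∀ i j, i ≠ j → ⟪v i, v j⟫ ≠ -1) →
      2 * Fintype.card ι ≤ 3 * Module.finrank ℝ (Submodule.span ℝ (Set.range v)) := by
  intro N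
  induction N with
  | zero =>
    intro ι _ hcard v _ _ _
    simp [Nat.le_zero.mp hcard]
  | succ N ih =>
    intro ι _ hcard v hunit hneg hne
    classical
    by_cases hli : LinearIndependent ℝ v
    · rw [finrank_span_eq_card hli]
      omega
    -- extract a nonnegative dependency
    rw [Fintype.not_linearIndependent_iff] at hli
    obtain ⟨g, hg0, i₁, hgi₁⟩ := hli
    obtain ⟨a₀, ha₀nn, ha₀ne, -, ha₀sum⟩ := split_dependency v hneg g hg0 i₁ hgi₁
    -- minimal support
    have hex : ∃ m : ℕ, ∃ a : ι → ℝ, ((∀ i, 0 ≤ a i) ∧ (∃ i, a i ≠ 0) ∧ ∑ i, a i • v i = 0) ∧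
        (Finset.univ.filter fun i => a i ≠ 0).card = m :=
      ⟨_, a₀, ⟨ha₀nn, ha₀ne, ha₀sum⟩, rfl⟩
    obtain ⟨a, ⟨hann, hane, hasum⟩, hacard⟩ := Nat.find_spec hex
    set m₀ : ℕ := Nat.find hex with hm₀
    set S : Finset ι := Finset.univ.filter fun i => a i ≠ 0 with hS
    have hmin : ∀ a' : ι → ℝ, (∀ i, 0 ≤ a' i) → (∃ i, a' i ≠ 0) → (∑ i, a' i • v i = 0) →
        m₀ ≤ (Finset.univ.filter fun i => a' i ≠ 0).card := by
      intro a' h1 h2 h3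
      exact Nat.find_min' hex ⟨a', ⟨h1, h2, h3⟩, rfl⟩
    have hmemS : ∀ i, i ∈ S ↔ a i ≠ 0 := by intro i; simp [hS]
    have hposS : ∀ i ∈ S, 0 < a i := fun i hi => lt_of_le_of_ne (hann i) (Ne.symm ((hmemS i).mp hi))
    have hzero : ∀ i ∉ S, a i = 0 := by
      intro i hi
      by_contra h
      exact hi ((hmemS i).mpr h)
    have hsumS : ∑ i ∈ S, a i • v i = 0 := by
      rw [← hasum]
      refine Finset.sum_subset (Finset.subset_univ S) fun x _ hx => ?_
      rw [hzero x hx, zero_smul]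
    have hSnonempty : S.Nonempty := by
      obtain ⟨i, hi⟩ := hane
      exact ⟨i, (hmemS i).mpr hi⟩
    -- |S| ≥ 3
    have hScard : S.card = m₀ := hacard
    have h3 : 3 ≤ S.card := by
      rcases Nat.lt_or_ge S.card 3 with h | h
      · exfalso
        interval_cases hsc : S.card
        · exact Finset.Nonempty.ne_empty hSnonempty (Finset.card_eq_zero.mp hsc)
        · obtain ⟨i, hi⟩ := Finset.card_eq_one.mp hsc
          have hiS : i ∈ S := hi ▸ Finset.mem_singleton_self i
          have : a i • v i = 0 := by rw [← hsumS, hi, Finset.sum_singleton]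
          rcases smul_eq_zero.mp this with h' | h'
          · exact (hmemS i).mp hiS h'
          · have := hunit i; rw [h', norm_zero] at this; norm_num at this
        · obtain ⟨i, j, hij, hij2⟩ := Finset.card_eq_two.mp hsc
          have hiS : i ∈ S := by rw [hij2]; simp
          have hjS : j ∈ S := by rw [hij2]; simp
          have hai : 0 < a i := hposS i hiS
          have haj : 0 < a j := hposS j hjS
          have hsum2 : a i • v i + a j • v j = 0 := by
            rw [← hsumS, hij2, Finset.sum_pair hij]
          set t : ℝ := ⟪v i, v j⟫ with ht
          have hvii : ⟪v i, v i⟫ = 1 := by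
            rw [real_inner_self_eq_norm_sq, hunit i]; norm_num
          have hvjj : ⟪v j, v j⟫ = 1 := by
            rw [real_inner_self_eq_norm_sq, hunit j]; norm_num
          have he1 : a i + a j * t = 0 := by
            have h := congrArg (fun x => ⟪v i, x⟫) hsum2
            simp only [inner_add_right, real_inner_smul_right, inner_zero_right] at h
            rw [hvii, mul_one, ← ht] at h
            exact h
          have he2 : a i * t + a j = 0 := by
            have h := congrArg (fun x => ⟪v j, x⟫) hsum2
            simp only [inner_add_right, real_inner_smul_right, inner_zero_right] at h
            rw [hvjj, mul_one, real_inner_comm (v i) (v j), ← ht] at h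
            exact h
          have htne : t ≠ -1 := hne i j hij
          have htge : -1 ≤ t := by
            have := abs_real_inner_le_norm (v i) (v j)
            rw [hunit i, hunit j, mul_one] at this
            have := abs_le.mp this
            exact this.1
          have htgt : -1 < t := lt_of_le_of_ne htge (Ne.symm htne)
          have htle : t ≤ 0 := hneg i j hij
          nlinarith
      · exact h
    -- orthogonality of S to its complement
    have horth : ∀ j ∉ S, ∀ i ∈ S, ⟪v j, v i⟫ = 0 := by
      intro j hj i hi
      have h0 : ∑ i ∈ S, a i * ⟪v j, v i⟫ = 0 := by
        have := congrArg (fun x => ⟪v j, x⟫) hsumS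
        simpa [inner_sum, real_inner_smul_right] using this
      have hterm : ∀ i ∈ S, a i * ⟪v j, v i⟫ ≤ 0 := by
        intro i hi
        have hij : j ≠ i := fun h => hj (h ▸ hi)
        exact mul_nonpos_of_nonneg_of_nonpos (hann i) (hneg j i hij)
      have := (Finset.sum_eq_zero_iff_of_nonpos hterm).mp h0 i hi
      rcases mul_eq_zero.mp this with h' | h'
      · exact absurd h' ((hmemS i).mp hi)
      · exact h'
    -- S minus a point is linearly independent
    obtain ⟨i₀, hi₀⟩ := hSnonempty
    have hind : LinearIndependent ℝ (fun i : ↥(S.erase i₀) => v i) := by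
      by_contra hdep
      rw [Fintype.not_linearIndependent_iff] at hdep
      obtain ⟨g', hg'0, i₂, hgi₂⟩ := hdep
      set c : ι → ℝ := fun i => if h : i ∈ S.erase i₀ then g' ⟨i, h⟩ else 0 with hcdef
      have hcval : ∀ i : ↥(S.erase i₀), c (i : ι) = g' i := fun i => dif_pos i.2
      have hcsum : ∑ i, c i • v i = 0 := by
        have e1 : ∑ i, c i • v i = ∑ i ∈ S.erase i₀, c i • v i :=
          (Finset.sum_subset (Finset.subset_univ _) fun x _ hx => by
            have hcx : c x = 0 := dif_neg hx
            rw [hcx, zero_smul]).symm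
        have e2 : ∑ i ∈ S.erase i₀, c i • v i = ∑ i : ↥(S.erase i₀), c (i : ι) • v i :=
          (Finset.sum_attach (S.erase i₀) (fun i => c i • v i)).symm
        rw [e1, e2, ← hg'0]
        exact Finset.sum_congr rfl fun i _ => by rw [hcval i]
      have hci₂ : c (i₂ : ι) ≠ 0 := by
        rw [hcval i₂]; exact hgi₂
      obtain ⟨a', ha'nn, ha'ne, ha'supp, ha'sum⟩ :=
        split_dependency v hneg c hcsum i₂ hci₂
      have hsub' : (Finset.univ.filter fun i => a' i ≠ 0) ⊆ S.erase i₀ := by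
        intro i hi
        simp only [Finset.mem_filter] at hi
        have := ha'supp i hi.2
        by_contra h
        exact this (dif_neg h)
      have hlt : (Finset.univ.filter fun i => a' i ≠ 0).card < m₀ := by
        calc (Finset.univ.filter fun i => a' i ≠ 0).card ≤ (S.erase i₀).card :=
              Finset.card_le_card hsub'
          _ = S.card - 1 := Finset.card_erase_of_mem hi₀
          _ < m₀ := by omega
      exact absurd (hmin a' ha'nn ha'ne ha'sum) (Nat.not_le.mpr hlt)
    -- spans
    set W₁ : Submodule ℝ E := Submodule.span ℝ (v '' ↑S) with hW₁
    set W₂ : Submodule ℝ E := Submodule.span ℝ (v '' ↑Sᶜ) with hW₂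
    have hrange1 : Set.range (fun i : ↥(S.erase i₀) => v i) = v '' ↑(S.erase i₀) :=
      (Set.image_eq_range v _).symm
    have hdim1 : m₀ - 1 ≤ Module.finrank ℝ W₁ := by
      have h1 : Module.finrank ℝ (Submodule.span ℝ (v '' ↑(S.erase i₀))) = m₀ - 1 := by
        rw [← hrange1, finrank_span_eq_card hind, Fintype.card_coe,
          Finset.card_erase_of_mem hi₀, hScard]
      have h2 : Submodule.span ℝ (v '' ↑(S.erase i₀)) ≤ W₁ :=
        Submodule.span_mono (Set.image_mono (f := v) (by exact_mod_cast Finset.erase_subset i₀ S))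
      calc m₀ - 1 = Module.finrank ℝ (Submodule.span ℝ (v '' ↑(S.erase i₀))) := h1.symm
        _ ≤ Module.finrank ℝ W₁ := Submodule.finrank_mono h2
    -- induction hypothesis on the complement
    have hrange2 : Set.range (fun i : ↥(Sᶜ : Finset ι) => v i) = v '' ↑Sᶜ :=
      (Set.image_eq_range v _).symm
    have hcard2 : Fintype.card ↥(Sᶜ : Finset ι) = Fintype.card ι - m₀ := by
      rw [Fintype.card_coe, Finset.card_compl, hScard]
    have hih : 2 * (Fintype.card ι - m₀) ≤ 3 * Module.finrank ℝ W₂ := by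
      have hcardle : Fintype.card ↥(Sᶜ : Finset ι) ≤ N := by
        rw [hcard2]
        have : m₀ ≤ Fintype.card ι := hScard ▸ Finset.card_le_univ S
        omega
      have := ih ↥(Sᶜ : Finset ι) hcardle (fun i => v i)
        (fun i => hunit i)
        (fun i j hij => hneg i j (fun h => hij (Subtype.ext h)))
        (fun i j hij => hne i j (fun h => hij (Subtype.ext h)))
      rwa [hcard2, hrange2, ← hW₂] at this
    -- orthogonal decomposition
    have hortho : W₁ ⟂ W₂ := by
      rw [hW₁, hW₂, Submodule.isOrtho_span]
      rintro u ⟨i, hi, rfl⟩ w ⟨j, hj, rfl⟩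
      rw [Finset.mem_coe, Finset.mem_compl] at hj
      rw [Finset.mem_coe] at hi
      rw [real_inner_comm]
      exact horth j hj i hi
    have hsup : Module.finrank ℝ W₁ + Module.finrank ℝ W₂ =
        Module.finrank ℝ (W₁ ⊔ W₂ : Submodule ℝ E) := by
      rw [← Submodule.finrank_sup_add_finrank_inf_eq, hortho.disjoint.eq_bot, finrank_bot,
        add_zero]
    have hsupeq : (W₁ ⊔ W₂ : Submodule ℝ E) = Submodule.span ℝ (Set.range v) := by
      rw [hW₁, hW₂, ← Submodule.span_union, ← Set.image_union, ← Set.image_univ]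
      congr 1
      rw [← Finset.coe_union, Finset.union_compl, Finset.coe_univ]
    -- arithmetic
    have hmle : m₀ ≤ Fintype.card ι := hScard ▸ Finset.card_le_univ S
    have hfinal : 3 * (Module.finrank ℝ W₁ + Module.finrank ℝ W₂) =
        3 * Module.finrank ℝ (Submodule.span ℝ (Set.range v)) := by
      rw [hsup, hsupeq]
    omega

end Aux

/-- Let `n = 2l` be even and let `q_1, …, q_k` be points on the unit sphere
`𝕊^n ⊆ ℝ^{n+1}` (angular metric) with `π/2 ≤ d(q_i,q_j) < π` for all `i ≠ j`.
Then `k ≤ 3l + 1`. -/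
theorem sphere_even_dim_separated_lt_pi_card_le
    (l n k : ℕ) (hn : n = 2 * l)
    (q : Fin k → EuclideanSpace ℝ (Fin (n + 1)))
    (hunit : ∀ i, ‖q i‖ = 1)
    (hsep : ∀ i j, i ≠ j → π / 2 ≤ arccos ⟪q i, q j⟫ ∧ arccos ⟪q i, q j⟫ < π) :
    k ≤ 3 * l + 1 := by
  have hle : ∀ i j, i ≠ j → ⟪q i, q j⟫ ≤ 0 := by
    intro i j hij
    by_contra h'
    push_neg at h'
    have h := (hsep i j hij).1
    have := arccos_lt_pi_div_two.mpr h'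
    linarith
  have hne1 : ∀ i j, i ≠ j → ⟪q i, q j⟫ ≠ -1 := by
    intro i j hij heq
    have h := (hsep i j hij).2
    rw [heq, arccos_neg_one] at h
    exact lt_irrefl _ h
  have key := two_mul_card_le_three_mul_finrank_span k (Fin k)
    (by simp) q hunit hle hne1
  have hrank : Module.finrank ℝ (Submodule.span ℝ (Set.range q)) ≤ n + 1 := by
    have h := Submodule.finrank_le (Submodule.span ℝ (Set.range q))
    rwa [finrank_euclideanSpace_fin] at h
  rw [Fintype.card_fin] at key
  omega
end

section
/- Let X and Y be metric spaces of diameter at most π. Define the spherical join X * Y as the quotient of X × Y × [0, π/2] by identifying (x, y, 0) ~ (x, y', 0) and (x, y, π/2) ~ (x', y, π/2), with distance given by cos d([x₁,y₁,t₁],[x₂,y₂,t₂]) = cos t₁ cos t₂ cos d_X(x₁,x₂) + sin t₁ sin t₂ cos d_Y(y₁,y₂). Then this formula defines a well-defined metric (in particular the quantity on the right lies in [-1,1], d is symmetric, vanishes exactly on the identified pairs, and satisfies the triangle inequality) and the join has diameter at most π. -/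
open Real

section JoinAux

open Finset

private lemma arccos_le_arccos' {x y : ℝ} (h : x ≤ y) : arccos y ≤ arccos x := by
  unfold Real.arccos
  have := Real.monotone_arcsin h
  linarith

private lemma gram_arccos {ι : Type*} [Fintype ι] (p q r : ι → ℝ)
    (hp : ∑ i, p i * p i = 1) (hq : ∑ i, q i * q i = 1) (hr : ∑ i, r i * r i = 1) :
    arccos (∑ i, p i * r i) ≤ arccos (∑ i, p i * q i) + arccos (∑ i, q i * r i) := by
  set A := ∑ i, p i * q i with hA
  set B := ∑ i, q i * r i with hB
  set C := ∑ i, p i * r i with hC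
  have sq_eq : ∀ f : ι → ℝ, ∑ i, f i ^ 2 = ∑ i, f i * f i := fun f =>
    Finset.sum_congr rfl fun i _ => sq (f i)
  have cs : ∀ f g : ι → ℝ, (∑ i, f i * g i) ^ 2 ≤ (∑ i, f i * f i) * ∑ i, g i * g i := by
    intro f g
    have := Finset.sum_mul_sq_le_sq_mul_sq Finset.univ f g
    rwa [sq_eq f, sq_eq g] at this
  have hA2 : A ^ 2 ≤ 1 := by have := cs p q; rw [hp, hq] at this; simpa using this
  have hB2 : B ^ 2 ≤ 1 := by have := cs q r; rw [hq, hr] at this; simpa using this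
  have hA1 : -1 ≤ A ∧ A ≤ 1 := abs_le.1 (abs_le_one_iff_mul_self_le_one.2 (by nlinarith))
  have hB1 : -1 ≤ B ∧ B ≤ 1 := abs_le.1 (abs_le_one_iff_mul_self_le_one.2 (by nlinarith))
  have expand : ∀ (s t : ℝ) (f g : ι → ℝ),
      ∑ i, (f i - s * q i) * (g i - t * q i)
        = (∑ i, f i * g i) - s * (∑ i, q i * g i) - t * (∑ i, f i * q i) + s * t := by
    intro s t f g
    have h : ∀ i, (f i - s * q i) * (g i - t * q i)
        = f i * g i - s * (q i * g i) - t * (f i * q i) + (s * t) * (q i * q i) := by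
      intro i; ring
    simp_rw [h, Finset.sum_add_distrib, Finset.sum_sub_distrib, ← Finset.mul_sum, hq, mul_one]
  have hpq : ∑ i, q i * p i = A := by rw [hA]; exact Finset.sum_congr rfl fun i _ => mul_comm _ _
  have hrq : ∑ i, r i * q i = B := by rw [hB]; exact Finset.sum_congr rfl fun i _ => mul_comm _ _
  have key : (C - A * B) ^ 2 ≤ (1 - A ^ 2) * (1 - B ^ 2) := by
    have h1 := cs (fun i => p i - A * q i) (fun i => r i - B * q i)
    have e1 := expand A B p r
    have e2 := expand A A p p
    have e3 := expand B B r r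
    rw [← hB, ← hC, ← hA] at e1
    rw [hpq, ← hA, hp] at e2
    rw [hrq, ← hB, hr] at e3
    rw [e1, e2, e3] at h1
    nlinarith [h1]
  have hs0 : 0 ≤ arccos A + arccos B :=
    add_nonneg (Real.arccos_nonneg A) (Real.arccos_nonneg B)
  by_cases hsum : arccos A + arccos B ≤ π
  · have hcs : cos (arccos A + arccos B) = A * B - √(1 - A ^ 2) * √(1 - B ^ 2) := by
      rw [Real.cos_add, Real.cos_arccos hA1.1 hA1.2, Real.cos_arccos hB1.1 hB1.2,
        Real.sin_arccos, Real.sin_arccos]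
    have hsq : (√(1 - A ^ 2) * √(1 - B ^ 2)) ^ 2 = (1 - A ^ 2) * (1 - B ^ 2) := by
      rw [mul_pow, Real.sq_sqrt (by linarith), Real.sq_sqrt (by linarith)]
    have hge : cos (arccos A + arccos B) ≤ C := by
      rw [hcs]
      nlinarith [mul_nonneg (Real.sqrt_nonneg (1 - A ^ 2)) (Real.sqrt_nonneg (1 - B ^ 2))]
    calc arccos C ≤ arccos (cos (arccos A + arccos B)) := arccos_le_arccos' hge
      _ = arccos A + arccos B := Real.arccos_cos hs0 hsum
  · exact le_trans (Real.arccos_le_pi C) (le_of_not_ge hsum)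

set_option maxHeartbeats 1000000 in
private lemma realize_sphere (α β γ : ℝ) (hα0 : 0 ≤ α) (hαπ : α ≤ π) (hβ0 : 0 ≤ β) (hβπ : β ≤ π)
    (hγ0 : 0 ≤ γ) (hγπ : γ ≤ π)
    (t1 : γ ≤ α + β) (t2 : β ≤ α + γ) (t3 : α ≤ β + γ) (hper : α + β + γ ≤ 2 * π) :
    ∃ a b c : Fin 3 → ℝ, (∑ i, a i * a i = 1) ∧ (∑ i, b i * b i = 1) ∧ (∑ i, c i * c i = 1) ∧
      (∑ i, a i * b i = Real.cos α) ∧ (∑ i, a i * c i = Real.cos β) ∧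
      (∑ i, b i * c i = Real.cos γ) := by
  have hsa : 0 ≤ Real.sin α := Real.sin_nonneg_of_nonneg_of_le_pi hα0 hαπ
  have hsb : 0 ≤ Real.sin β := Real.sin_nonneg_of_nonneg_of_le_pi hβ0 hβπ
  have h1 : Real.cos γ ≤ Real.cos α * Real.cos β + Real.sin α * Real.sin β := by
    rw [← Real.cos_sub, ← Real.cos_abs (α - β)]
    exact Real.cos_le_cos_of_nonneg_of_le_pi (abs_nonneg _) hγπ
      (abs_sub_le_iff.2 ⟨by linarith, by linarith⟩)
  have h2 : Real.cos α * Real.cos β - Real.sin α * Real.sin β ≤ Real.cos γ := by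
    rw [← Real.cos_add]
    by_cases hab : α + β ≤ π
    · exact Real.cos_le_cos_of_nonneg_of_le_pi hγ0 hab t1
    · rw [show Real.cos (α + β) = Real.cos (2 * π - (α + β)) by rw [Real.cos_two_pi_sub]]
      exact Real.cos_le_cos_of_nonneg_of_le_pi hγ0 (by linarith) (by linarith)
  have key : (Real.cos γ - Real.cos α * Real.cos β) ^ 2 ≤ Real.sin α ^ 2 * Real.sin β ^ 2 := by
    nlinarith [mul_nonneg (sub_nonneg.2 h1) (sub_nonneg.2 h2)]
  by_cases hsa0 : Real.sin α = 0
  · have hca : Real.cos α * Real.cos α = 1 := by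
      have := Real.sin_sq_add_cos_sq α; nlinarith
    have hγ : Real.cos γ = Real.cos α * Real.cos β := by
      nlinarith [key, sq_nonneg (Real.cos γ - Real.cos α * Real.cos β)]
    refine ⟨![1, 0, 0], ![Real.cos α, 0, 0], ![Real.cos β, Real.sin β, 0],
      ?_, ?_, ?_, ?_, ?_, ?_⟩ <;> simp [Fin.sum_univ_three, hca, hγ]
    nlinarith [Real.sin_sq_add_cos_sq β]
  · have hsa' : 0 < Real.sin α := lt_of_le_of_ne hsa (Ne.symm hsa0)
    obtain ⟨w, hwdef⟩ : ∃ w : ℝ, w = (Real.cos γ - Real.cos α * Real.cos β) / Real.sin α :=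
      ⟨_, rfl⟩
    have hww : Real.sin α * w = Real.cos γ - Real.cos α * Real.cos β := by
      rw [hwdef]; field_simp
    have h3 : (Real.sin α * w) ^ 2 ≤ Real.sin α ^ 2 * Real.sin β ^ 2 := by rw [hww]; exact key
    have hw2 : w ^ 2 ≤ Real.sin β ^ 2 := by
      nlinarith [h3, mul_pos hsa' hsa']
    obtain ⟨u, hu2⟩ : ∃ u : ℝ, u * u = Real.sin β ^ 2 - w ^ 2 :=
      ⟨√(Real.sin β ^ 2 - w ^ 2), Real.mul_self_sqrt (by linarith)⟩
    refine ⟨![1, 0, 0], ![Real.cos α, Real.sin α, 0], ![Real.cos β, w, u],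
      ?_, ?_, ?_, ?_, ?_, ?_⟩ <;> simp [Fin.sum_univ_three]
    · nlinarith [Real.sin_sq_add_cos_sq α]
    · nlinarith [Real.sin_sq_add_cos_sq β, hu2]
    · nlinarith [hww]

private lemma sum_elim_mul (c c' d d' : ℝ) (f g f' g' : Fin 3 → ℝ) :
    ∑ i : Fin 3 ⊕ Fin 3, (Sum.elim (fun j => c * f j) (fun j => d * g j) i) *
      (Sum.elim (fun j => c' * f' j) (fun j => d' * g' j) i)
      = c * c' * (∑ j, f j * f' j) + d * d' * (∑ j, g j * g' j) := by
  rw [Fintype.sum_sum_type]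
  simp only [Sum.elim_inl, Sum.elim_inr]
  rw [show (∑ j, (c * f j) * (c' * f' j)) = c * c' * ∑ j, f j * f' j by
    rw [Finset.mul_sum]; exact Finset.sum_congr rfl fun i _ => by ring,
    show (∑ j, (d * g j) * (d' * g' j)) = d * d' * ∑ j, g j * g' j by
    rw [Finset.mul_sum]; exact Finset.sum_congr rfl fun i _ => by ring]

end JoinAux

/-- The distance formula of the spherical join `X * Y`, defined on representatives
`(x, y, t) ∈ X × Y × [0, π/2]`:
`cos d((x₁,y₁,t₁),(x₂,y₂,t₂)) = cos t₁ cos t₂ cos d_X(x₁,x₂) + sin t₁ sin t₂ cos d_Y(y₁,y₂)`. -/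
noncomputable def joinDist {X Y : Type*} [MetricSpace X] [MetricSpace Y]
    (p q : X × Y × Set.Icc (0 : ℝ) (π / 2)) : ℝ :=
  arccos (Real.cos p.2.2 * Real.cos q.2.2 * Real.cos (dist p.1 q.1) +
    Real.sin p.2.2 * Real.sin q.2.2 * Real.cos (dist p.2.1 q.2.1))

set_option maxHeartbeats 2000000 in
/-- For metric spaces `X`, `Y` of diameter `≤ π` in which every triangle has
perimeter `≤ 2π`, the join formula defines a well-defined metric on the quotient
identifying `(x,y,0) ~ (x,y',0)` and `(x,y,π/2) ~ (x',y,π/2)`: the quantity inside `arccos`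
lies in `[-1,1]`, the distance is symmetric, vanishes exactly on identified pairs,
satisfies the triangle inequality, and is bounded by `π`. -/
theorem joinDist_is_metric (X Y : Type*) [MetricSpace X] [MetricSpace Y]
    (hdX : ∀ a b : X, dist a b ≤ π) (hdY : ∀ a b : Y, dist a b ≤ π)
    (hpX : ∀ a b c : X, dist a b + dist b c + dist c a ≤ 2 * π)
    (hpY : ∀ a b c : Y, dist a b + dist b c + dist c a ≤ 2 * π) :
    (∀ p q : X × Y × Set.Icc (0 : ℝ) (π / 2),
      -1 ≤ Real.cos p.2.2 * Real.cos q.2.2 * Real.cos (dist p.1 q.1) +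
          Real.sin p.2.2 * Real.sin q.2.2 * Real.cos (dist p.2.1 q.2.1) ∧
        Real.cos p.2.2 * Real.cos q.2.2 * Real.cos (dist p.1 q.1) +
          Real.sin p.2.2 * Real.sin q.2.2 * Real.cos (dist p.2.1 q.2.1) ≤ 1) ∧
    (∀ p q : X × Y × Set.Icc (0 : ℝ) (π / 2), joinDist p q = joinDist q p) ∧
    (∀ p q : X × Y × Set.Icc (0 : ℝ) (π / 2), joinDist p q = 0 ↔
      (p.2.2 = q.2.2 ∧ (((p.2.2 : ℝ) = 0 ∧ p.1 = q.1) ∨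
        ((p.2.2 : ℝ) = π / 2 ∧ p.2.1 = q.2.1) ∨ (p.1 = q.1 ∧ p.2.1 = q.2.1)))) ∧
    (∀ p q r : X × Y × Set.Icc (0 : ℝ) (π / 2),
      joinDist p r ≤ joinDist p q + joinDist q r) ∧
    (∀ p q : X × Y × Set.Icc (0 : ℝ) (π / 2), joinDist p q ≤ π) := by
  have hπ := Real.pi_pos
  -- basic facts about the parameter t
  have hcos : ∀ t : Set.Icc (0 : ℝ) (π / 2), 0 ≤ Real.cos t := by
    intro t
    exact Real.cos_nonneg_of_mem_Icc ⟨by linarith [t.2.1], t.2.2⟩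
  have hsin : ∀ t : Set.Icc (0 : ℝ) (π / 2), 0 ≤ Real.sin t := by
    intro t
    exact Real.sin_nonneg_of_nonneg_of_le_pi t.2.1 (by linarith [t.2.2])
  have hbound : ∀ p q : X × Y × Set.Icc (0 : ℝ) (π / 2),
      -1 ≤ Real.cos p.2.2 * Real.cos q.2.2 * Real.cos (dist p.1 q.1) +
          Real.sin p.2.2 * Real.sin q.2.2 * Real.cos (dist p.2.1 q.2.1) ∧
        Real.cos p.2.2 * Real.cos q.2.2 * Real.cos (dist p.1 q.1) +
          Real.sin p.2.2 * Real.sin q.2.2 * Real.cos (dist p.2.1 q.2.1) ≤ 1 := by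
    intro p q
    have hc1 := hcos p.2.2; have hc2 := hcos q.2.2
    have hs1 := hsin p.2.2; have hs2 := hsin q.2.2
    have hcc := mul_nonneg hc1 hc2
    have hss := mul_nonneg hs1 hs2
    have hx1 : Real.cos (dist p.1 q.1) ≤ 1 := Real.cos_le_one _
    have hx2 : -1 ≤ Real.cos (dist p.1 q.1) := Real.neg_one_le_cos _
    have hy1 : Real.cos (dist p.2.1 q.2.1) ≤ 1 := Real.cos_le_one _
    have hy2 : -1 ≤ Real.cos (dist p.2.1 q.2.1) := Real.neg_one_le_cos _
    have hcs := Real.cos_sub ((p.2.2 : ℝ)) ((q.2.2 : ℝ))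
    have hle := Real.cos_le_one ((p.2.2 : ℝ) - (q.2.2 : ℝ))
    constructor
    · nlinarith [mul_nonneg hcc (by linarith : (0:ℝ) ≤ Real.cos (dist p.1 q.1) + 1),
        mul_nonneg hss (by linarith : (0:ℝ) ≤ Real.cos (dist p.2.1 q.2.1) + 1)]
    · nlinarith [mul_nonneg hcc (by linarith : (0:ℝ) ≤ 1 - Real.cos (dist p.1 q.1)),
        mul_nonneg hss (by linarith : (0:ℝ) ≤ 1 - Real.cos (dist p.2.1 q.2.1))]
  refine ⟨hbound, ?_, ?_, ?_, ?_⟩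
  · -- symmetry
    intro p q
    unfold joinDist
    rw [dist_comm p.1 q.1, dist_comm p.2.1 q.2.1]
    congr 1
    ring
  · -- vanishing
    intro p q
    have hc1 := hcos p.2.2; have hc2 := hcos q.2.2
    have hs1 := hsin p.2.2; have hs2 := hsin q.2.2
    have ht1 := p.2.2.2; have ht2 := q.2.2.2
    constructor
    · intro h
      unfold joinDist at h
      have hA1 := (hbound p q).2
      have hA : Real.cos p.2.2 * Real.cos q.2.2 * Real.cos (dist p.1 q.1) +
          Real.sin p.2.2 * Real.sin q.2.2 * Real.cos (dist p.2.1 q.2.1) = 1 := by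
        have := Real.arccos_eq_zero.1 h
        linarith
      have hx1 : Real.cos (dist p.1 q.1) ≤ 1 := Real.cos_le_one _
      have hy1 : Real.cos (dist p.2.1 q.2.1) ≤ 1 := Real.cos_le_one _
      have hcs := Real.cos_sub ((p.2.2 : ℝ)) ((q.2.2 : ℝ))
      have hle := Real.cos_le_one ((p.2.2 : ℝ) - (q.2.2 : ℝ))
      have hc12 : Real.cos ((p.2.2 : ℝ) - (q.2.2 : ℝ)) = 1 := by
        nlinarith [mul_nonneg (mul_nonneg hc1 hc2) (by linarith : (0:ℝ) ≤ 1 - Real.cos (dist p.1 q.1)),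
          mul_nonneg (mul_nonneg hs1 hs2) (by linarith : (0:ℝ) ≤ 1 - Real.cos (dist p.2.1 q.2.1))]
      have ht : (p.2.2 : ℝ) = (q.2.2 : ℝ) := by
        have := (Real.cos_eq_one_iff_of_lt_of_lt
          (x := (p.2.2 : ℝ) - (q.2.2 : ℝ))
          (by linarith [ht1.1, ht1.2, ht2.1, ht2.2])
          (by linarith [ht1.1, ht1.2, ht2.1, ht2.2])).1 hc12
        linarith
      refine ⟨Subtype.ext ht, ?_⟩
      rw [← ht] at hA
      have hpyth := Real.sin_sq_add_cos_sq ((p.2.2 : ℝ))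
      have hxeq : Real.cos (p.2.2 : ℝ) = 0 ∨ p.1 = q.1 := by
        by_cases hcc : Real.cos (p.2.2 : ℝ) = 0
        · exact Or.inl hcc
        · right
          have hcpos : 0 < Real.cos (p.2.2 : ℝ) := lt_of_le_of_ne hc1 (Ne.symm hcc)
          have hcx : Real.cos (dist p.1 q.1) = 1 := by
            nlinarith [mul_nonneg (mul_nonneg hs1 hs1)
              (by linarith : (0:ℝ) ≤ 1 - Real.cos (dist p.2.1 q.2.1)),
              mul_pos hcpos hcpos]
          have := (Real.cos_eq_one_iff_of_lt_of_lt
            (x := dist p.1 q.1) (by linarith [dist_nonneg (x := p.1) (y := q.1)])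
            (by linarith [hdX p.1 q.1])).1 hcx
          exact dist_eq_zero.1 this
      have hyeq : Real.sin (p.2.2 : ℝ) = 0 ∨ p.2.1 = q.2.1 := by
        by_cases hss : Real.sin (p.2.2 : ℝ) = 0
        · exact Or.inl hss
        · right
          have hspos : 0 < Real.sin (p.2.2 : ℝ) := lt_of_le_of_ne hs1 (Ne.symm hss)
          have hcy : Real.cos (dist p.2.1 q.2.1) = 1 := by
            nlinarith [mul_nonneg (mul_nonneg hc1 hc1)
              (by linarith : (0:ℝ) ≤ 1 - Real.cos (dist p.1 q.1)),
              mul_pos hspos hspos]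
          have := (Real.cos_eq_one_iff_of_lt_of_lt
            (x := dist p.2.1 q.2.1) (by linarith [dist_nonneg (x := p.2.1) (y := q.2.1)])
            (by linarith [hdY p.2.1 q.2.1])).1 hcy
          exact dist_eq_zero.1 this
      rcases hxeq with hx | hx
      · rcases hyeq with hy | hy
        · exfalso; nlinarith
        · refine Or.inr (Or.inl ⟨?_, hy⟩)
          by_contra hne
          have hlt : (p.2.2 : ℝ) < π / 2 := lt_of_le_of_ne ht1.2 hne
          have := Real.cos_pos_of_mem_Ioo
            (show (p.2.2 : ℝ) ∈ Set.Ioo (-(π/2)) (π/2) from ⟨by linarith [ht1.1], hlt⟩)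
          linarith
      · rcases hyeq with hy | hy
        · refine Or.inl ⟨?_, hx⟩
          by_contra hne
          have hlt : 0 < (p.2.2 : ℝ) := lt_of_le_of_ne ht1.1 (Ne.symm hne)
          have := Real.sin_pos_of_pos_of_lt_pi hlt (by linarith [ht1.2])
          linarith
        · exact Or.inr (Or.inr ⟨hx, hy⟩)
    · rintro ⟨hteq, h⟩
      have ht : (q.2.2 : ℝ) = (p.2.2 : ℝ) := by rw [hteq]
      unfold joinDist
      rcases h with ⟨h0, hxy⟩ | ⟨hpi2, hy⟩ | ⟨hx, hy⟩
      · rw [show dist p.1 q.1 = 0 by rw [hxy, dist_self], ht, h0]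
        simp
      · rw [show dist p.2.1 q.2.1 = 0 by rw [hy, dist_self], ht, hpi2]
        simp
      · rw [show dist p.1 q.1 = 0 by rw [hx, dist_self],
          show dist p.2.1 q.2.1 = 0 by rw [hy, dist_self], ht]
        rw [show Real.cos (p.2.2 : ℝ) * Real.cos (p.2.2 : ℝ) * Real.cos 0 +
            Real.sin (p.2.2 : ℝ) * Real.sin (p.2.2 : ℝ) * Real.cos 0 = 1 by
          have := Real.sin_sq_add_cos_sq ((p.2.2 : ℝ)); rw [Real.cos_zero]; nlinarith]
        exact Real.arccos_one
  · -- triangle inequality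
    intro p q r
    obtain ⟨a1, a2, a3, na1, na2, na3, hab, hac, hbc⟩ :=
      realize_sphere (dist p.1 q.1) (dist p.1 r.1) (dist q.1 r.1)
        dist_nonneg (hdX _ _) dist_nonneg (hdX _ _) dist_nonneg (hdX _ _)
        (by rw [dist_comm p.1 q.1]; exact dist_triangle q.1 p.1 r.1)
        (dist_triangle p.1 q.1 r.1)
        (by calc dist p.1 q.1 ≤ dist p.1 r.1 + dist r.1 q.1 := dist_triangle p.1 r.1 q.1
            _ = dist p.1 r.1 + dist q.1 r.1 := by rw [dist_comm r.1 q.1])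
        (by have := hpX p.1 q.1 r.1; rw [dist_comm r.1 p.1] at this; linarith)
    obtain ⟨b1, b2, b3, nb1, nb2, nb3, hab', hac', hbc'⟩ :=
      realize_sphere (dist p.2.1 q.2.1) (dist p.2.1 r.2.1) (dist q.2.1 r.2.1)
        dist_nonneg (hdY _ _) dist_nonneg (hdY _ _) dist_nonneg (hdY _ _)
        (by rw [dist_comm p.2.1 q.2.1]; exact dist_triangle q.2.1 p.2.1 r.2.1)
        (dist_triangle p.2.1 q.2.1 r.2.1)
        (by calc dist p.2.1 q.2.1 ≤ dist p.2.1 r.2.1 + dist r.2.1 q.2.1 :=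
              dist_triangle p.2.1 r.2.1 q.2.1
            _ = dist p.2.1 r.2.1 + dist q.2.1 r.2.1 := by rw [dist_comm r.2.1 q.2.1])
        (by have := hpY p.2.1 q.2.1 r.2.1; rw [dist_comm r.2.1 p.2.1] at this; linarith)
    set v1 : Fin 3 ⊕ Fin 3 → ℝ :=
      Sum.elim (fun j => Real.cos p.2.2 * a1 j) (fun j => Real.sin p.2.2 * b1 j) with hv1
    set v2 : Fin 3 ⊕ Fin 3 → ℝ :=
      Sum.elim (fun j => Real.cos q.2.2 * a2 j) (fun j => Real.sin q.2.2 * b2 j) with hv2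
    set v3 : Fin 3 ⊕ Fin 3 → ℝ :=
      Sum.elim (fun j => Real.cos r.2.2 * a3 j) (fun j => Real.sin r.2.2 * b3 j) with hv3
    have n1 : ∑ i, v1 i * v1 i = 1 := by
      rw [hv1, sum_elim_mul, na1, nb1]
      have := Real.sin_sq_add_cos_sq ((p.2.2 : ℝ)); nlinarith
    have n2 : ∑ i, v2 i * v2 i = 1 := by
      rw [hv2, sum_elim_mul, na2, nb2]
      have := Real.sin_sq_add_cos_sq ((q.2.2 : ℝ)); nlinarith
    have n3 : ∑ i, v3 i * v3 i = 1 := by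
      rw [hv3, sum_elim_mul, na3, nb3]
      have := Real.sin_sq_add_cos_sq ((r.2.2 : ℝ)); nlinarith
    have h12 : ∑ i, v1 i * v2 i
        = Real.cos p.2.2 * Real.cos q.2.2 * Real.cos (dist p.1 q.1) +
          Real.sin p.2.2 * Real.sin q.2.2 * Real.cos (dist p.2.1 q.2.1) := by
      rw [hv1, hv2, sum_elim_mul, hab, hab']
    have h13 : ∑ i, v1 i * v3 i
        = Real.cos p.2.2 * Real.cos r.2.2 * Real.cos (dist p.1 r.1) +
          Real.sin p.2.2 * Real.sin r.2.2 * Real.cos (dist p.2.1 r.2.1) := by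
      rw [hv1, hv3, sum_elim_mul, hac, hac']
    have h23 : ∑ i, v2 i * v3 i
        = Real.cos q.2.2 * Real.cos r.2.2 * Real.cos (dist q.1 r.1) +
          Real.sin q.2.2 * Real.sin r.2.2 * Real.cos (dist q.2.1 r.2.1) := by
      rw [hv2, hv3, sum_elim_mul, hbc, hbc']
    have := gram_arccos v1 v2 v3 n1 n2 n3
    rw [h12, h13, h23] at this
    exact this
  · -- bounded by π
    intro p q
    exact Real.arccos_le_pi _
end

section
/- In ℝ^n, one cannot find vectors v_1, …, v_{n+2}, all nonzero, such that ⟨v_1, v_i⟩ < 0 for all i ≥ 2 and ⟨v_i, v_j⟩ ≤ 0 for all i ≠ j. Equivalently: if v_1, …, v_k ∈ ℝ^n \ {0} satisfy ⟨v_i,v_j⟩ ≤ 0 for i ≠ j and ⟨v_1,v_i⟩ < 0 for i ≥ 2, then k ≤ n + 1. -/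
open scoped RealInnerProductSpace

/-- In `ℝ^n`, if `v_1, …, v_k` are nonzero vectors with pairwise nonpositive
inner products such that `⟪v_1, v_i⟫ < 0` for all `i ≥ 2`, then `k ≤ n + 1`. -/
theorem nonpos_inner_one_strict_card_le
    (n k : ℕ) (hk : 0 < k) (v : Fin k → EuclideanSpace ℝ (Fin n))
    (hne : ∀ i, v i ≠ 0)
    (hnonpos : ∀ i j, i ≠ j → ⟪v i, v j⟫ ≤ 0)
    (hstrict : ∀ i, i ≠ ⟨0, hk⟩ → ⟪v ⟨0, hk⟩, v i⟫ < 0) :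
    k ≤ n + 1 := by
  set z : Fin k := ⟨0, hk⟩ with hz
  have hli : LinearIndependent ℝ (fun i : {i : Fin k // i ≠ z} => v i) := by
    rw [linearIndependent_iff']
    intro s g hsum i hi
    classical
    set P := s.filter (fun j => 0 ≤ g j) with hP
    set N := s.filter (fun j => ¬ 0 ≤ g j) with hN
    have hPN : Disjoint P N := Finset.disjoint_filter_filter_not s s _
    have hsplit : P ∪ N = s := Finset.filter_union_filter_not_eq _ s
    set a := ∑ j ∈ P, g j • v j with ha
    set b := ∑ j ∈ N, (-g j) • v j with hb
    have hab : a = b := by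
      have h1 : a + ∑ j ∈ N, g j • v j = 0 := by
        rw [ha, ← Finset.sum_union hPN, hsplit, hsum]
      have h2 : ∑ j ∈ N, g j • v j = -b := by
        rw [hb, ← Finset.sum_neg_distrib]
        simp [neg_smul]
      rw [h2] at h1
      linear_combination (norm := module) h1
    have hneg : ∀ j ∈ N, g j < 0 := by
      intro j hj
      rw [hN, Finset.mem_filter] at hj
      exact lt_of_not_ge hj.2
    have hpos : ∀ j ∈ P, 0 ≤ g j := by
      intro j hj
      rw [hP, Finset.mem_filter] at hj
      exact hj.2
    have hinner : ⟪a, b⟫ ≤ 0 := by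
      rw [ha, hb, sum_inner]
      apply Finset.sum_nonpos
      intro x hx
      rw [inner_sum]
      apply Finset.sum_nonpos
      intro y hy
      rw [real_inner_smul_left, real_inner_smul_right]
      have hxy : (x : Fin k) ≠ (y : Fin k) := by
        intro h
        exact (Finset.disjoint_left.mp hPN hx) (Subtype.ext h ▸ hy)
      have h3 := hnonpos x y hxy
      have h1 : 0 ≤ g x := hpos x hx
      have h2 : 0 ≤ -g y := by linarith [hneg y hy]
      nlinarith [mul_nonneg h1 h2, h3]
    have ha0 : a = 0 := real_inner_self_nonpos.mp (by nth_rewrite 2 [hab]; exact hinner)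
    have hb0 : b = 0 := hab ▸ ha0
    -- From ⟪v z, a⟫ = 0, each g j = 0 for j ∈ P
    have hPzero : ∀ j ∈ P, g j = 0 := by
      have h0 : ∑ j ∈ P, g j * ⟪v z, v j⟫ = 0 := by
        have : ⟪v z, a⟫ = 0 := by rw [ha0, inner_zero_right]
        rw [ha, inner_sum] at this
        simp only [real_inner_smul_right] at this
        exact this
      intro j hj
      have hterm := (Finset.sum_eq_zero_iff_of_nonpos (fun j hj => by
        have hs := hstrict j j.2
        have := hpos j hj
        nlinarith)).mp h0 j hj
      have hs := hstrict j j.2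
      rcases mul_eq_zero.mp hterm with h | h
      · exact h
      · exact absurd h (ne_of_lt hs)
    have hNempty : ∀ j ∈ N, False := by
      have h0 : ∑ j ∈ N, (-g j) * ⟪v z, v j⟫ = 0 := by
        have : ⟪v z, b⟫ = 0 := by rw [hb0, inner_zero_right]
        rw [hb, inner_sum] at this
        simp only [real_inner_smul_right] at this
        exact this
      intro j hj
      have hterm := (Finset.sum_eq_zero_iff_of_nonpos (fun j hj => by
        have hs := hstrict j j.2
        have := hneg j hj
        nlinarith)).mp h0 j hj
      have hs := hstrict j j.2
      have hgj := hneg j hj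
      nlinarith
    rw [← hsplit, Finset.mem_union] at hi
    rcases hi with hi | hi
    · exact hPzero i hi
    · exact (hNempty i hi).elim
  have hcard : Fintype.card {i : Fin k // i ≠ z} ≤ n := by
    have := hli.fintype_card_le_finrank
    simpa [finrank_euclideanSpace_fin] using this
  have : Fintype.card {i : Fin k // i ≠ z} = k - 1 := by
    simp [Fintype.card_subtype_compl]
  omega
end
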